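/- Let Q₀, Q₁ ⊆ (-∞,0)^n be nonempty convex sets with Q_j + (-∞,0]^n ⊆ Q_j, whose copolars Q_j° = {x ∈ [0,∞)^n : ⟨x,y⟩ ≤ -1 ∀y ∈ Q_j} have finite covolume Covol(Q_j°) = Vol([0,∞)^n \ Q_j°). Then for t ∈ (0,1) and Q_t = (1-t)Q₀ + tQ₁ (Minkowski combination), Covol(Q_t°) ≤ Covol(Q₀°)^{1-t} · Covol(Q₁°)^t. -/

import Mathlib

open MeasureTheory Set

noncomputable section

/-- The open negative orthant `(-∞,0)^n`. -/
def negOrth (n : ℕ) : Set (Fin n → ℝ) := {y | ∀ i, y i < 0}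

/-- The nonnegative orthant `[0,∞)^n`. -/
def nonnegOrth (n : ℕ) : Set (Fin n → ℝ) := {x | ∀ i, 0 ≤ x i}

/-- The nonpositive orthant `(-∞,0]^n`. -/
def nonposOrth (n : ℕ) : Set (Fin n → ℝ) := {v | ∀ i, v i ≤ 0}

/-- The Euclidean pairing `⟨x,y⟩ = ∑ i, x i * y i`. -/
def pairing {n : ℕ} (x y : Fin n → ℝ) : ℝ := ∑ i, x i * y i

/-- Support function `h_Q(x) = sup_{y ∈ Q} ⟨x,y⟩`. -/
def supp {n : ℕ} (Q : Set (Fin n → ℝ)) (x : Fin n → ℝ) : ℝ :=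
  sSup ((fun y => pairing x y) '' Q)

/-- Copolar `Q° = {x ∈ [0,∞)^n : ⟨x,y⟩ ≤ -1 ∀ y ∈ Q}`. -/
def copolar {n : ℕ} (Q : Set (Fin n → ℝ)) : Set (Fin n → ℝ) :=
  {x ∈ nonnegOrth n | ∀ y ∈ Q, pairing x y ≤ -1}

/-- Minkowski combination `(1-t)Q₀ + tQ₁`. -/
def minkComb {n : ℕ} (t : ℝ) (Q₀ Q₁ : Set (Fin n → ℝ)) : Set (Fin n → ℝ) :=
  {z | ∃ a ∈ Q₀, ∃ b ∈ Q₁, z = (1 - t) • a + t • b}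

/-!
On the nonnegative orthant the support function `h_Q` of `Q ⊆ (-∞,0]^n` is `≤ 0` and positively
homogeneous, so its superlevel set `{h_Q > -r}` is `r • ([0,∞)^n \ Q°)`. The layer-cake formula
then gives `∫_{[0,∞)^n} e^{h_Q} = n! · Covol(Q°)`, the factor `n!` being
`∫₀¹ (-log s)^n ds = Γ(n+1)`. Since `h_{Q_t} = (1-t) h_{Q₀} + t h_{Q₁}`, Hölder's inequality with
exponents `1/(1-t)` and `1/t` bounds `∫ e^{h_{Q_t}}` by `(∫ e^{h_{Q₀}})^{1-t} (∫ e^{h_{Q₁}})^t`.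
-/

open scoped Pointwise ENNReal Nat
open Real

section
variable {n : ℕ}

lemma pairing_smul_left (r : ℝ) (x y : Fin n → ℝ) : pairing (r • x) y = r * pairing x y := by
  simp only [pairing, Pi.smul_apply, smul_eq_mul, Finset.mul_sum, mul_assoc]

lemma pairing_add_smul_right (a b : ℝ) (x y z : Fin n → ℝ) :
    pairing x (a • y + b • z) = a * pairing x y + b * pairing x z := by
  simp only [pairing, Pi.add_apply, Pi.smul_apply, smul_eq_mul, Finset.mul_sum,
    ← Finset.sum_add_distrib]
  exact Finset.sum_congr rfl fun i _ => by ring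

lemma pairing_nonpos {x y : Fin n → ℝ} (hx : x ∈ nonnegOrth n) (hy : y ∈ nonposOrth n) :
    pairing x y ≤ 0 :=
  Finset.sum_nonpos fun i _ => mul_nonpos_of_nonneg_of_nonpos (hx i) (hy i)

lemma continuous_pairing_left (y : Fin n → ℝ) : Continuous fun x : Fin n → ℝ => pairing x y :=
  continuous_finsetSum _ fun i _ => (continuous_apply i).mul continuous_const

lemma isClosed_nonnegOrth : IsClosed (nonnegOrth n) := by
  simpa only [nonnegOrth, ofPred_forall] using
    isClosed_iInter fun i => isClosed_le continuous_const (continuous_apply i)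

lemma measurableSet_nonnegOrth : MeasurableSet (nonnegOrth n) :=
  isClosed_nonnegOrth.measurableSet

lemma smul_mem_nonnegOrth_iff {r : ℝ} (hr : 0 < r) {x : Fin n → ℝ} :
    r • x ∈ nonnegOrth n ↔ x ∈ nonnegOrth n :=
  forall_congr' fun i => by simp only [Pi.smul_apply, smul_eq_mul, mul_nonneg_iff_of_pos_left hr]

lemma negOrth_subset_nonposOrth : negOrth n ⊆ nonposOrth n := fun _ hy i => (hy i).le

lemma minkComb_subset_nonposOrth {Q₀ Q₁ : Set (Fin n → ℝ)} (h₀ : Q₀ ⊆ nonposOrth n)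
    (h₁ : Q₁ ⊆ nonposOrth n) {t : ℝ} (ht₀ : 0 ≤ t) (ht₁ : t ≤ 1) :
    minkComb t Q₀ Q₁ ⊆ nonposOrth n := by
  rintro _ ⟨a, ha, b, hb, rfl⟩ i
  have := mul_nonpos_of_nonneg_of_nonpos (sub_nonneg.2 ht₁) (h₀ ha i)
  have := mul_nonpos_of_nonneg_of_nonpos ht₀ (h₁ hb i)
  simp only [Pi.add_apply, Pi.smul_apply, smul_eq_mul]
  linarith

lemma Set.Nonempty.minkComb {Q₀ Q₁ : Set (Fin n → ℝ)} (h₀ : Q₀.Nonempty) (h₁ : Q₁.Nonempty)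
    (t : ℝ) : (minkComb t Q₀ Q₁).Nonempty :=
  let ⟨a, ha⟩ := h₀; let ⟨b, hb⟩ := h₁; ⟨_, a, ha, b, hb, rfl⟩

end

lemma lintegral_Ioo_ofReal_neg_log_pow (n : ℕ) :
    ∫⁻ s in Ioo (0 : ℝ) 1, ENNReal.ofReal ((-log s) ^ n) = n ! := by
  have himage : (fun r => exp (-r)) '' Ioi 0 = Ioo 0 1 := by
    rw [← image_image exp, image_neg_Ioi, neg_zero, image_exp_Iio, exp_zero]
  rw [← himage, lintegral_image_eq_lintegral_abs_deriv_mul measurableSet_Ioi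
    (fun r _ => ((hasDerivAt_neg r).exp).hasDerivWithinAt)
    (fun r _ r' _ h => neg_injective (exp_injective h))]
  have hGamma := GammaIntegral_convergent (s := n + 1) (by positivity)
  calc ∫⁻ r in Ioi 0, ENNReal.ofReal |exp (-r) * -1| * ENNReal.ofReal ((-log (exp (-r))) ^ n)
      = ∫⁻ r in Ioi 0, ENNReal.ofReal (exp (-r) * r ^ ((n + 1 : ℝ) - 1)) := by
        refine setLIntegral_congr_fun measurableSet_Ioi fun r _ => ?_
        rw [← ENNReal.ofReal_mul (abs_nonneg _), mul_neg_one, abs_neg, abs_of_pos (exp_pos _),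
          log_exp, neg_neg, add_sub_cancel_right, rpow_natCast]
    _ = n ! := by
        rw [← ofReal_integral_eq_lintegral_ofReal hGamma, ← Gamma_eq_integral (by positivity),
          Gamma_nat_eq_factorial, ENNReal.ofReal_natCast]
        exact ae_restrict_of_forall_mem measurableSet_Ioi fun r hr =>
          mul_nonneg (exp_pos _).le (rpow_nonneg (le_of_lt hr) _)

section
variable {n : ℕ} {Q : Set (Fin n → ℝ)} {x : Fin n → ℝ}

lemma bddAbove_image_pairing (hQ : Q ⊆ nonposOrth n) (hx : x ∈ nonnegOrth n) :
    BddAbove ((fun y => pairing x y) '' Q) :=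
  ⟨0, forall_mem_image.2 fun _ hy => pairing_nonpos hx (hQ hy)⟩

lemma supp_nonpos (hQ : Q ⊆ nonposOrth n) (hne : Q.Nonempty) (hx : x ∈ nonnegOrth n) :
    supp Q x ≤ 0 :=
  csSup_le (hne.image _) (forall_mem_image.2 fun _ hy => pairing_nonpos hx (hQ hy))

lemma lt_supp_iff (hQ : Q ⊆ nonposOrth n) (hne : Q.Nonempty) (hx : x ∈ nonnegOrth n) {c : ℝ} :
    c < supp Q x ↔ ∃ y ∈ Q, c < pairing x y := by
  rw [supp, lt_csSup_iff (bddAbove_image_pairing hQ hx) (hne.image _), exists_mem_image]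

lemma supp_minkComb {Q₀ Q₁ : Set (Fin n → ℝ)} (h₀ : Q₀ ⊆ nonposOrth n) (h₁ : Q₁ ⊆ nonposOrth n)
    (h₀ne : Q₀.Nonempty) (h₁ne : Q₁.Nonempty) (hx : x ∈ nonnegOrth n) {t : ℝ} (ht₀ : 0 ≤ t)
    (ht₁ : t ≤ 1) :
    supp (minkComb t Q₀ Q₁) x = (1 - t) * supp Q₀ x + t * supp Q₁ x := by
  have himage : (fun y => pairing x y) '' minkComb t Q₀ Q₁ =
      (1 - t) • ((fun y => pairing x y) '' Q₀) + t • ((fun y => pairing x y) '' Q₁) := by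
    ext z
    simp only [minkComb, mem_image, mem_add, mem_smul_set, mem_ofPred_eq, smul_eq_mul]
    constructor
    · rintro ⟨_, ⟨a, ha, b, hb, rfl⟩, rfl⟩
      exact ⟨_, ⟨_, ⟨a, ha, rfl⟩, rfl⟩, _, ⟨_, ⟨b, hb, rfl⟩, rfl⟩,
        (pairing_add_smul_right _ _ _ _ _).symm⟩
    · rintro ⟨_, ⟨_, ⟨a, ha, rfl⟩, rfl⟩, _, ⟨_, ⟨b, hb, rfl⟩, rfl⟩, rfl⟩
      exact ⟨_, ⟨a, ha, b, hb, rfl⟩, pairing_add_smul_right _ _ _ _ _⟩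
  have h1t : 0 ≤ 1 - t := sub_nonneg.2 ht₁
  rw [supp, himage,
    csSup_add (h₀ne.image _).smul_set ((bddAbove_image_pairing h₀ hx).smul_of_nonneg h1t)
      (h₁ne.image _).smul_set ((bddAbove_image_pairing h₁ hx).smul_of_nonneg ht₀),
    Real.sSup_smul_of_nonneg h1t, Real.sSup_smul_of_nonneg ht₀, smul_eq_mul, smul_eq_mul, supp,
    supp]

end

section
variable {n : ℕ} {Q : Set (Fin n → ℝ)}

lemma mem_nonnegOrth_diff_copolar {x : Fin n → ℝ} :
    x ∈ nonnegOrth n \ copolar Q ↔ x ∈ nonnegOrth n ∧ ∃ y ∈ Q, -1 < pairing x y := by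
  simp [copolar]

lemma setOf_neg_lt_supp_eq_smul (hQ : Q ⊆ nonposOrth n) (hne : Q.Nonempty) {r : ℝ} (hr : 0 < r) :
    {x | x ∈ nonnegOrth n ∧ -r < supp Q x} = r • (nonnegOrth n \ copolar Q) := by
  ext x
  rw [mem_smul_set_iff_inv_smul_mem₀ hr.ne', mem_nonnegOrth_diff_copolar,
    smul_mem_nonnegOrth_iff (inv_pos.2 hr), mem_ofPred_eq, and_congr_right_iff]
  intro hx
  simp only [lt_supp_iff hQ hne hx, pairing_smul_left, lt_inv_mul_iff₀ hr, mul_neg_one]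

lemma measurable_indicator_supp (hQ : Q ⊆ nonposOrth n) (hne : Q.Nonempty) :
    Measurable ((nonnegOrth n).indicator (supp Q)) := by
  refine measurable_of_Ioi fun c => ?_
  have hopen : supp Q ⁻¹' Ioi c ∩ nonnegOrth n =
      (⋃ y ∈ Q, {x | c < pairing x y}) ∩ nonnegOrth n := by
    ext x
    simp +contextual only [mem_inter_iff, mem_preimage, mem_Ioi, mem_iUnion, mem_ofPred_eq,
      exists_prop, and_congr_left_iff, lt_supp_iff hQ hne, implies_true]
  rw [indicator_preimage, Set.ite, hopen]
  exact ((isOpen_biUnion fun y _ => isOpen_lt continuous_const (continuous_pairing_left y)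
    ).measurableSet.inter measurableSet_nonnegOrth).union
    ((measurable_const measurableSet_Ioi).diff measurableSet_nonnegOrth)

lemma aemeasurable_supp_restrict_nonnegOrth (hQ : Q ⊆ nonposOrth n) (hne : Q.Nonempty) :
    AEMeasurable (supp Q) (volume.restrict (nonnegOrth n)) :=
  (aemeasurable_indicator_iff measurableSet_nonnegOrth).1
    (measurable_indicator_supp hQ hne).aemeasurable

lemma volume_restrict_nonnegOrth_setOf_lt_exp_supp (hQ : Q ⊆ nonposOrth n) (hne : Q.Nonempty)
    {s : ℝ} (hs : s ∈ Ioo 0 1) :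
    volume.restrict (nonnegOrth n) {x | s < exp (supp Q x)} =
      ENNReal.ofReal ((-log s) ^ n) * volume (nonnegOrth n \ copolar Q) := by
  have hr : 0 < -log s := neg_pos.2 (log_neg hs.1 hs.2)
  have hset : {x | s < exp (supp Q x)} ∩ nonnegOrth n =
      {x | x ∈ nonnegOrth n ∧ -(-log s) < supp Q x} := by
    ext x
    rw [neg_neg, mem_inter_iff, mem_ofPred_eq, mem_ofPred_eq, log_lt_iff_lt_exp hs.1, and_comm]
  rw [Measure.restrict_apply' measurableSet_nonnegOrth, hset,
    setOf_neg_lt_supp_eq_smul hQ hne hr, Measure.addHaar_smul, Module.finrank_fin_fun,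
    abs_of_pos (pow_pos hr n)]

lemma volume_restrict_nonnegOrth_setOf_lt_exp_supp_of_one_le (hQ : Q ⊆ nonposOrth n)
    (hne : Q.Nonempty) {s : ℝ} (hs : 1 ≤ s) :
    volume.restrict (nonnegOrth n) {x | s < exp (supp Q x)} = 0 := by
  rw [Measure.restrict_apply' measurableSet_nonnegOrth,
    eq_empty_of_forall_notMem (s := {x | s < exp (supp Q x)} ∩ nonnegOrth n) fun x hx =>
      (hs.trans_lt hx.1).not_ge (exp_le_one_iff.2 (supp_nonpos hQ hne hx.2)),
    measure_empty]

theorem lintegral_exp_supp (hQ : Q ⊆ nonposOrth n) (hne : Q.Nonempty) :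
    ∫⁻ x in nonnegOrth n, ENNReal.ofReal (exp (supp Q x)) =
      n ! * volume (nonnegOrth n \ copolar Q) := by
  rw [lintegral_eq_lintegral_meas_lt _ (ae_of_all _ fun x => (exp_pos _).le)
      (aemeasurable_supp_restrict_nonnegOrth hQ hne).exp,
    ← Ioo_union_Ici_eq_Ioi zero_lt_one,
    lintegral_union measurableSet_Ici (disjoint_left.2 fun _ hs hs' => hs.2.not_ge hs'),
    setLIntegral_congr_fun measurableSet_Ioo fun s hs =>
      volume_restrict_nonnegOrth_setOf_lt_exp_supp hQ hne hs,
    setLIntegral_congr_fun measurableSet_Ici fun s hs =>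
      volume_restrict_nonnegOrth_setOf_lt_exp_supp_of_one_le hQ hne hs,
    lintegral_zero, add_zero, lintegral_mul_const _ (by fun_prop),
    lintegral_Ioo_ofReal_neg_log_pow]

end

theorem volume_nonnegOrth_diff_copolar_minkComb_le {n : ℕ} {Q₀ Q₁ : Set (Fin n → ℝ)}
    (h₀ : Q₀ ⊆ nonposOrth n) (h₁ : Q₁ ⊆ nonposOrth n) (h₀ne : Q₀.Nonempty) (h₁ne : Q₁.Nonempty)
    {t : ℝ} (ht₀ : 0 ≤ t) (ht₁ : t ≤ 1) :
    volume (nonnegOrth n \ copolar (minkComb t Q₀ Q₁)) ≤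
      volume (nonnegOrth n \ copolar Q₀) ^ (1 - t) * volume (nonnegOrth n \ copolar Q₁) ^ t := by
  have hfac₀ : (n ! : ℝ≥0∞) ≠ 0 := Nat.cast_ne_zero.2 n.factorial_ne_zero
  have hfac : (n ! : ℝ≥0∞) ≠ ⊤ := ENNReal.natCast_ne_top _
  have hexp (Q : Set (Fin n → ℝ)) (hQ : Q ⊆ nonposOrth n) (hne : Q.Nonempty) :
      AEMeasurable (fun x => ENNReal.ofReal (exp (supp Q x))) (volume.restrict (nonnegOrth n)) :=
    (aemeasurable_supp_restrict_nonnegOrth hQ hne).exp.ennreal_ofReal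
  rw [← ENNReal.mul_le_mul_iff_right hfac₀ hfac]
  calc (n ! : ℝ≥0∞) * volume (nonnegOrth n \ copolar (minkComb t Q₀ Q₁))
      = ∫⁻ x in nonnegOrth n, ENNReal.ofReal (exp (supp Q₀ x)) ^ (1 - t) *
          ENNReal.ofReal (exp (supp Q₁ x)) ^ t := by
        rw [← lintegral_exp_supp (minkComb_subset_nonposOrth h₀ h₁ ht₀ ht₁) (h₀ne.minkComb h₁ne t)]
        refine setLIntegral_congr_fun measurableSet_nonnegOrth fun x hx => ?_
        rw [supp_minkComb h₀ h₁ h₀ne h₁ne hx ht₀ ht₁, exp_add, ENNReal.ofReal_mul (exp_pos _).le,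
          mul_comm (1 - t), mul_comm t, exp_mul, exp_mul, ENNReal.ofReal_rpow_of_pos (exp_pos _),
          ENNReal.ofReal_rpow_of_pos (exp_pos _)]
    _ ≤ (∫⁻ x in nonnegOrth n, ENNReal.ofReal (exp (supp Q₀ x))) ^ (1 - t) *
          (∫⁻ x in nonnegOrth n, ENNReal.ofReal (exp (supp Q₁ x))) ^ t :=
        ENNReal.lintegral_mul_norm_pow_le (hexp Q₀ h₀ h₀ne) (hexp Q₁ h₁ h₁ne) (sub_nonneg.2 ht₁)
          ht₀ (sub_add_cancel 1 t)
    _ = n ! * (volume (nonnegOrth n \ copolar Q₀) ^ (1 - t) *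
          volume (nonnegOrth n \ copolar Q₁) ^ t) := by
        rw [lintegral_exp_supp h₀ h₀ne, lintegral_exp_supp h₁ h₁ne,
          ENNReal.mul_rpow_of_nonneg _ _ (sub_nonneg.2 ht₁), ENNReal.mul_rpow_of_nonneg _ _ ht₀,
          mul_mul_mul_comm, ← ENNReal.rpow_add _ _ hfac₀ hfac, sub_add_cancel, ENNReal.rpow_one]

theorem covol_copolar_log_convex_general {n : ℕ} (Q₀ Q₁ : Set (Fin n → ℝ))
    (h₀ : Q₀ ⊆ negOrth n) (h₁ : Q₁ ⊆ negOrth n)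
    (h₀ne : Q₀.Nonempty) (h₁ne : Q₁.Nonempty)
    (hfin₀ : volume (nonnegOrth n \ copolar Q₀) < ⊤)
    (hfin₁ : volume (nonnegOrth n \ copolar Q₁) < ⊤)
    (t : ℝ) (ht : t ∈ Set.Ioo (0:ℝ) 1) :
    (volume (nonnegOrth n \ copolar (minkComb t Q₀ Q₁))).toReal ≤
      (volume (nonnegOrth n \ copolar Q₀)).toReal ^ (1 - t) *
      (volume (nonnegOrth n \ copolar Q₁)).toReal ^ t := by
  have hle := volume_nonnegOrth_diff_copolar_minkComb_le (h₀.trans negOrth_subset_nonposOrth)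
    (h₁.trans negOrth_subset_nonposOrth) h₀ne h₁ne ht.1.le ht.2.le
  have hfin : volume (nonnegOrth n \ copolar Q₀) ^ (1 - t) *
      volume (nonnegOrth n \ copolar Q₁) ^ t ≠ ⊤ :=
    ENNReal.mul_ne_top (ENNReal.rpow_ne_top_of_nonneg (sub_nonneg.2 ht.2.le) hfin₀.ne)
      (ENNReal.rpow_ne_top_of_nonneg ht.1.le hfin₁.ne)
  simpa only [ENNReal.toReal_mul, ← ENNReal.toReal_rpow] using ENNReal.toReal_mono hfin hle

theorem covol_copolar_log_convex {n : ℕ} (Q₀ Q₁ : Set (Fin n → ℝ))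
    (h₀ : Q₀ ⊆ negOrth n) (h₁ : Q₁ ⊆ negOrth n)
    (h₀ne : Q₀.Nonempty) (h₁ne : Q₁.Nonempty)
    (h₀c : Convex ℝ Q₀) (h₁c : Convex ℝ Q₁)
    (h₀compl : ∀ y ∈ Q₀, ∀ v ∈ nonposOrth n, y + v ∈ Q₀)
    (h₁compl : ∀ y ∈ Q₁, ∀ v ∈ nonposOrth n, y + v ∈ Q₁)
    (hfin₀ : volume (nonnegOrth n \ copolar Q₀) < ⊤)
    (hfin₁ : volume (nonnegOrth n \ copolar Q₁) < ⊤)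
    (t : ℝ) (ht : t ∈ Set.Ioo (0:ℝ) 1) :
    (volume (nonnegOrth n \ copolar (minkComb t Q₀ Q₁))).toReal ≤
      (volume (nonnegOrth n \ copolar Q₀)).toReal ^ (1 - t) *
      (volume (nonnegOrth n \ copolar Q₁)).toReal ^ t :=
  covol_copolar_log_convex_general Q₀ Q₁ h₀ h₁ h₀ne h₁ne hfin₀ hfin₁ t ht
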